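/- Let $n$ be a multiple of $4$, $n \geq 4$. Define $L : (\mathbb{Z}/n\mathbb{Z})^2 \to \{C,A,T\}$ by $L(x,y) = A$ if $x$ is even, $L(x,y) = C$ if $x$ is odd and $x + 2y \equiv 1 \pmod 4$, and $L(x,y) = T$ if $x$ is odd and $x + 2y \equiv 3 \pmod 4$. Then the number of occurrences of CAT equals $(3/2) n^2$. -/
import Mathlib


open Finset

inductive Letter | C | A | T
deriving DecidableEq

section helpers
lemma valmod (n k : ℕ) [NeZero n] [NeZero k] (hk : k ∣ n) (x : ZMod n) :
    x.val % k = (ZMod.castHom hk (ZMod k) x).val := by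
  have h : (ZMod.castHom hk (ZMod k)) x = ((x.val : ℕ) : ZMod k) := by
    conv_lhs => rw [← ZMod.natCast_rightInverse (n := n) x]
    rw [map_natCast]
  rw [h, ZMod.val_natCast]

lemma fiber_card (n : ℕ) [NeZero n] (h4 : 4 ∣ n) (c : ZMod 4) :
    (univ.filter fun x : ZMod n => ZMod.castHom h4 (ZMod 4) x = c).card = n / 4 := by
  have key : ∀ x : ZMod n, ZMod.castHom h4 (ZMod 4) x = c ↔ x.val % 4 = c.val := by
    intro x
    rw [valmod n 4 h4 x]
    exact ⟨fun h => by rw [h], fun h => ZMod.val_injective 4 h⟩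
  have hc : c.val < 4 := c.val_lt
  have hn4 : 0 < n := Nat.pos_of_ne_zero (NeZero.ne n)
  have hmod : n % 4 = 0 := Nat.eq_zero_of_dvd_of_lt h4 |> fun _ => Nat.mod_eq_zero_of_dvd h4
  rw [← Finset.card_range (n / 4)]
  apply Finset.card_bij' (fun x _ => x.val / 4) (fun i _ => ((4 * i + c.val : ℕ) : ZMod n))
  · intro x hx
    rw [Finset.mem_filter] at hx
    have h1 := (key x).mp hx.2
    have h2 := x.val_lt
    rw [Finset.mem_range]
    omega
  · intro x hx
    rw [Finset.mem_filter] at hx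
    have h1 := (key x).mp hx.2
    have : 4 * (x.val / 4) + c.val = x.val := by omega
    rw [this, ZMod.natCast_rightInverse x]
  · intro i hi
    rw [Finset.mem_range] at hi
    rw [ZMod.val_natCast, Nat.mod_eq_of_lt (show 4 * i + c.val < n by omega)]
    omega
  · intro i hi
    rw [Finset.mem_range] at hi
    rw [Finset.mem_filter]
    refine ⟨Finset.mem_univ _, (key _).mpr ?_⟩
    rw [ZMod.val_natCast, Nat.mod_eq_of_lt (show 4 * i + c.val < n by omega)]
    omega

lemma card_filter_comp {α β : Type*} [Fintype α] [Fintype β] [DecidableEq β]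
    (F : α → β) (R : β → Prop) [DecidablePred R] (K : ℕ)
    (hF : ∀ c, (univ.filter fun a => F a = c).card = K) :
    (univ.filter fun a => R (F a)).card = (univ.filter R).card * K := by
  rw [Finset.card_eq_sum_card_fiberwise (f := F) (t := univ.filter R)
    (fun a ha => by simp at ha ⊢; exact ha)]
  rw [Finset.sum_congr rfl (fun c hc => ?_), Finset.sum_const, smul_eq_mul]
  rw [← hF c]
  congr 1
  ext a
  simp only [Finset.mem_filter, Finset.mem_univ, true_and] at hc ⊢
  constructor
  · rintro ⟨_, h⟩; exact h
  · intro h; exact ⟨h ▸ hc, h⟩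

lemma card_filter_equiv {α β : Type*} [Fintype α] [Fintype β] (e : α ≃ β)
    (P : α → Prop) (Q : β → Prop) [DecidablePred P] [DecidablePred Q]
    (h : ∀ a, P a ↔ Q (e a)) : (univ.filter P).card = (univ.filter Q).card := by
  rw [← Fintype.card_subtype, ← Fintype.card_subtype]
  exact Fintype.card_congr (Equiv.subtypeEquiv e h)
end helpers

theorem stmt_13 (n : ℕ) [NeZero n] (hn : 4 ≤ n) (h4 : 4 ∣ n)
    (L : (Fin 2 → ZMod n) → Letter)
    (hL : ∀ p : Fin 2 → ZMod n,
      L p = if (p 0).val % 2 = 0 then Letter.A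
            else if (p 0 + 2 * p 1).val % 4 = 1 then Letter.C else Letter.T) :
    ((Finset.univ.filter
        (fun p : (Fin 2 → ZMod n) × (Fin 2 → ZMod n) =>
          (∀ j, p.2 j = 0 ∨ p.2 j = 1 ∨ p.2 j = -1) ∧ p.2 ≠ 0 ∧
          L p.1 = Letter.C ∧ L (p.1 + p.2) = Letter.A ∧
          L (p.1 + 2 • p.2) = Letter.T)).card : ℝ)
      = 3 / 2 * n ^ 2 := by
  haveI : Fact (1 < n) := ⟨by omega⟩
  set φ := ZMod.castHom h4 (ZMod 4) with hφ
  -- translation lemmas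
  have hval4 : ∀ x : ZMod n, x.val % 4 = (φ x).val := valmod n 4 h4
  have hval2 : ∀ x : ZMod n, x.val % 2 = (φ x).val % 2 := by
    intro x
    rw [← Nat.mod_mod_of_dvd x.val (by norm_num : (2:ℕ) ∣ 4), hval4]
  have hv1 : ∀ z : ZMod 4, z.val = 1 ↔ z = 1 := by decide
  have hm4 : ∀ x y : ZMod n, (x + 2 * y).val % 4 = (φ x + 2 * φ y).val := by
    intro x y
    rw [hval4, map_add, map_mul, map_ofNat]
  have hC : ∀ q : Fin 2 → ZMod n,
      L q = Letter.C ↔ ((φ (q 0)).val % 2 = 1 ∧ φ (q 0) + 2 * φ (q 1) = 1) := by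
    intro q
    rw [hL q]
    have hp := hval2 (q 0)
    have hq := hm4 (q 0) (q 1)
    have h2 : (φ (q 0)).val % 2 = 0 ∨ (φ (q 0)).val % 2 = 1 := Nat.mod_two_eq_zero_or_one _
    split_ifs with h1 h2'
    · simp only [show Letter.A ≠ Letter.C from by decide, false_iff]
      rintro ⟨ha, _⟩; omega
    · simp only [true_iff]
      rw [hp] at h1
      rw [hq, hv1] at h2'
      exact ⟨by omega, h2'⟩
    · simp only [show Letter.T ≠ Letter.C from by decide, false_iff]
      rintro ⟨_, hb⟩
      rw [hq, hv1] at h2'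
      exact h2' hb
  have hA : ∀ q : Fin 2 → ZMod n, L q = Letter.A ↔ (φ (q 0)).val % 2 = 0 := by
    intro q
    rw [hL q, hval2 (q 0)]
    split_ifs with h1 h2'
    · simp [h1]
    · exact iff_of_false (by decide) h1
    · exact iff_of_false (by decide) h1
  have hT : ∀ q : Fin 2 → ZMod n,
      L q = Letter.T ↔ ((φ (q 0)).val % 2 = 1 ∧ φ (q 0) + 2 * φ (q 1) ≠ 1) := by
    intro q
    rw [hL q]
    have hp := hval2 (q 0)
    have hq := hm4 (q 0) (q 1)
    split_ifs with h1 h2'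
    · simp only [show Letter.A ≠ Letter.T from by decide, false_iff]
      rintro ⟨ha, _⟩; omega
    · simp only [show Letter.C ≠ Letter.T from by decide, false_iff]
      rintro ⟨_, hb⟩
      rw [hq, hv1] at h2'
      exact hb h2'
    · simp only [true_iff]
      rw [hp] at h1
      rw [hq, hv1] at h2'
      exact ⟨by omega, h2'⟩
  -- the key equivalence
  have one_ne_neg : (1 : ZMod n) ≠ -1 := by
    intro h
    have : (2 : ZMod n) = 0 := by linear_combination h
    have h2' : ((2 : ℕ) : ZMod n) = 0 := by push_cast; exact this
    have := (ZMod.natCast_eq_zero_iff 2 n).mp h2'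
    have := Nat.le_of_dvd (by norm_num) this
    omega
  have key : ∀ (p v : Fin 2 → ZMod n),
      ((∀ j, v j = 0 ∨ v j = 1 ∨ v j = -1) ∧ v ≠ 0 ∧
        L p = Letter.C ∧ L (p + v) = Letter.A ∧ L (p + 2 • v) = Letter.T)
      ↔ (((φ (p 0)).val % 2 = 1 ∧ φ (p 0) + 2 * φ (p 1) = 1) ∧
         ((v 0 = 1 ∨ v 0 = -1) ∧ (v 1 = 0 ∨ v 1 = 1 ∨ v 1 = -1))) := by
    intro p v
    have e0 : (p + v) 0 = p 0 + v 0 := rfl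
    have e1 : ∀ j, (p + 2 • v) j = p j + (v j + v j) := by
      intro j
      show p j + (2 • v) j = _
      rw [Pi.smul_apply, two_smul]
    constructor
    · rintro ⟨hall, -, hc, ha, -⟩
      refine ⟨(hC p).mp hc, ?_, hall 1⟩
      rcases hall 0 with h0 | h0 | h0
      · exfalso
        have := (hA (p + v)).mp ha
        rw [e0, h0, add_zero] at this
        have := (hC p).mp hc
        omega
      · exact Or.inl h0
      · exact Or.inr h0
    · rintro ⟨⟨h1, h2⟩, hv0, hv1⟩
      have hv0ne : v 0 ≠ 0 := by
        rcases hv0 with h | h <;> rw [h]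
        · exact one_ne_zero
        · exact neg_ne_zero.mpr one_ne_zero
      refine ⟨?_, ?_, (hC p).mpr ⟨h1, h2⟩, ?_, ?_⟩
      · intro j
        fin_cases j
        · rcases hv0 with h | h
          · exact Or.inr (Or.inl h)
          · exact Or.inr (Or.inr h)
        · exact hv1
      · intro h
        exact hv0ne (by rw [h]; rfl)
      · rw [hA, e0, map_add]
        have hw : φ (v 0) = 1 ∨ φ (v 0) = -1 := by
          rcases hv0 with h | h <;> rw [h]
          · exact Or.inl (map_one φ)
          · exact Or.inr (by rw [map_neg, map_one])
        revert h1 hw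
        generalize φ (p 0) = u
        generalize φ (v 0) = w
        revert u w
        decide
      · rw [hT, e1 0, e1 1, map_add, map_add, map_add, map_add]
        have hw0 : φ (v 0) = 1 ∨ φ (v 0) = -1 := by
          rcases hv0 with h | h <;> rw [h]
          · exact Or.inl (map_one φ)
          · exact Or.inr (by rw [map_neg, map_one])
        have hw1 : φ (v 1) = 0 ∨ φ (v 1) = 1 ∨ φ (v 1) = -1 := by
          rcases hv1 with h | h | h <;> rw [h]
          · exact Or.inl (map_zero φ)
          · exact Or.inr (Or.inl (map_one φ))
          · exact Or.inr (Or.inr (by rw [map_neg, map_one]))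
        revert h1 h2 hw0 hw1
        generalize φ (p 0) = u
        generalize φ (p 1) = b
        generalize φ (v 0) = w0
        generalize φ (v 1) = w1
        revert u b w0 w1
        decide
  -- counting
  have hsplit : (Finset.univ.filter
        (fun p : (Fin 2 → ZMod n) × (Fin 2 → ZMod n) =>
          (∀ j, p.2 j = 0 ∨ p.2 j = 1 ∨ p.2 j = -1) ∧ p.2 ≠ 0 ∧
          L p.1 = Letter.C ∧ L (p.1 + p.2) = Letter.A ∧
          L (p.1 + 2 • p.2) = Letter.T))
      = (univ.filter (fun p : Fin 2 → ZMod n =>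
            (φ (p 0)).val % 2 = 1 ∧ φ (p 0) + 2 * φ (p 1) = 1)) ×ˢ
        (univ.filter (fun v : Fin 2 → ZMod n =>
            (v 0 = 1 ∨ v 0 = -1) ∧ (v 1 = 0 ∨ v 1 = 1 ∨ v 1 = -1))) := by
    rw [← Finset.filter_product, Finset.univ_product_univ]
    exact Finset.filter_congr (fun x _ => key x.1 x.2)
  rw [hsplit, Finset.card_product]
  -- card of the p-part
  have hFc : ∀ c : ZMod 4 × ZMod 4,
      (univ.filter fun q : ZMod n × ZMod n => (φ q.1, φ q.2) = c).card
        = (n / 4) * (n / 4) := by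
    intro c
    have hprod : (univ.filter fun q : ZMod n × ZMod n => (φ q.1, φ q.2) = c)
        = (univ.filter fun x => φ x = c.1) ×ˢ (univ.filter fun x => φ x = c.2) := by
      rw [← Finset.filter_product, Finset.univ_product_univ]
      exact Finset.filter_congr (fun x _ => Prod.ext_iff)
    rw [hprod, Finset.card_product, fiber_card n h4, fiber_card n h4]
  have hc1 : (univ.filter (fun p : Fin 2 → ZMod n =>
      (φ (p 0)).val % 2 = 1 ∧ φ (p 0) + 2 * φ (p 1) = 1)).card
      = 4 * ((n / 4) * (n / 4)) := by
    have heq := card_filter_equiv (piFinTwoEquiv (fun _ : Fin 2 => ZMod n))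
      (fun p : Fin 2 → ZMod n => (φ (p 0)).val % 2 = 1 ∧ φ (p 0) + 2 * φ (p 1) = 1)
      (fun q : ZMod n × ZMod n =>
        (fun c : ZMod 4 × ZMod 4 => c.1.val % 2 = 1 ∧ c.1 + 2 * c.2 = 1) (φ q.1, φ q.2))
      (fun p => Iff.rfl)
    rw [heq]
    rw [card_filter_comp (fun q : ZMod n × ZMod n => (φ q.1, φ q.2))
      (fun c : ZMod 4 × ZMod 4 => c.1.val % 2 = 1 ∧ c.1 + 2 * c.2 = 1)
      ((n / 4) * (n / 4)) hFc]
    have h4' : #(filter (fun c : ZMod 4 × ZMod 4 => c.1.val % 2 = 1 ∧ c.1 + 2 * c.2 = 1) univ) = 4 := by decide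
    rw [h4']
  -- card of the v-part
  have hzne1 : (0 : ZMod n) ≠ 1 := zero_ne_one
  have hnegne0 : (-1 : ZMod n) ≠ 0 := neg_ne_zero.mpr one_ne_zero
  have hzneneg : (0 : ZMod n) ≠ -1 := fun h => hnegne0 h.symm
  have hA' : (univ.filter fun x : ZMod n => x = 1 ∨ x = -1) = {1, -1} := by
    ext x; simp
  have hB' : (univ.filter fun x : ZMod n => x = 0 ∨ x = 1 ∨ x = -1) = {0, 1, -1} := by
    ext x; simp
  have hc2 : (univ.filter (fun v : Fin 2 → ZMod n =>
      (v 0 = 1 ∨ v 0 = -1) ∧ (v 1 = 0 ∨ v 1 = 1 ∨ v 1 = -1))).card = 6 := by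
    have heq := card_filter_equiv (piFinTwoEquiv (fun _ : Fin 2 => ZMod n))
      (fun v : Fin 2 → ZMod n => (v 0 = 1 ∨ v 0 = -1) ∧ (v 1 = 0 ∨ v 1 = 1 ∨ v 1 = -1))
      (fun q : ZMod n × ZMod n =>
        (q.1 = 1 ∨ q.1 = -1) ∧ (q.2 = 0 ∨ q.2 = 1 ∨ q.2 = -1)) (fun p => Iff.rfl)
    rw [heq, ← Finset.univ_product_univ,
      Finset.filter_product (fun a : ZMod n => a = 1 ∨ a = -1)
        (fun b : ZMod n => b = 0 ∨ b = 1 ∨ b = -1),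
      Finset.card_product, hA', hB']
    rw [Finset.card_pair one_ne_neg]
    rw [Finset.card_insert_of_notMem
      (show (0:ZMod n) ∉ ({1, -1} : Finset (ZMod n)) by simp [hzne1, hzneneg]),
      Finset.card_pair one_ne_neg]
  rw [hc1, hc2]
  obtain ⟨m, hm⟩ := id h4
  have hdiv : n / 4 = m := by rw [hm]; exact Nat.mul_div_cancel_left m (by norm_num)
  rw [hdiv, hm]
  push_cast
  ring
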